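/- Let p be an odd prime and let G be a finite non-abelian p-group such that Aut_l(G) = Inn(G). Then exp(G/Z(G)) = exp(L(G)). -/

import Mathlib

/-- The absolute centre `L(G)`: elements fixed by every automorphism of `G`. -/
def absoluteCenter (G : Type*) [Group G] : Subgroup G where
  carrier := {g | ∀ α : MulAut G, α g = g}
  one_mem' := fun α => map_one α
  mul_mem' := fun {a b} ha hb α => by rw [map_mul, ha α, hb α]
  inv_mem' := fun {a} ha α => by rw [map_inv, ha α]

/-- The group `Aut_l(G)` of absolute central automorphisms of `G`. -/
def absCentralAut (G : Type*) [Group G] : Subgroup (MulAut G) where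
  carrier := {α | ∀ g : G, g⁻¹ * α g ∈ absoluteCenter G}
  one_mem' := fun g => by simpa using (absoluteCenter G).one_mem
  mul_mem' := fun {α β} hα hβ g => by
    have h : g⁻¹ * (α * β) g = (g⁻¹ * β g) * ((β g)⁻¹ * α (β g)) := by
      simp [MulAut.mul_apply, mul_assoc]
    rw [h]; exact mul_mem (hβ g) (hα (β g))
  inv_mem' := fun {α} hα g => by
    have h : g⁻¹ * α⁻¹ g = ((α⁻¹ g)⁻¹ * α (α⁻¹ g))⁻¹ := by
      simp [MulAut.inv_def, mul_assoc]
    rw [h]; exact inv_mem (hα (α⁻¹ g))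

/-!
Inner automorphisms are absolute central, so every commutator lies in `L(G) ≤ Z(G)`:
`G` has class two and `⁅a, bⁿ⁆ = ⁅a, b⁆ⁿ`. Hence `e = exp(G/Z(G))` is the least common
exponent of the commutators, which gives `e ∣ exp(L(G))`.

Conversely, let `l ∈ L(G)` with `lᵉ ≠ 1`, and write `e = pʳ`. If some `gᵉ ∉ L(G)`, the
abelian `p`-group `G/L(G)` maps onto a cyclic group of order divisible by `pʳ⁺¹`, so some
homomorphism `f : G/L(G) → L(G)` hits an element of order `pʳ⁺¹`. Then `g ↦ g f(g)` is an
absolute central automorphism, hence inner, so every `f(g)` is a commutator and is killed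
by `e`: contradiction. Otherwise `g ↦ gᵉ` is a homomorphism into `L(G)` (`e` is odd, so
`e` divides `e choose 2`) and `g ↦ gᵉ⁺¹` is an absolute central automorphism (`p ∤ e + 1`),
hence inner; being inner it fixes the central `l`, so `lᵉ = 1`.
-/

open Subgroup
open scoped commutatorElement

section ClassTwo

variable {G : Type*} [Group G] {a b : G}

theorem commutatorElement_pow_right_of_mem_center (h : ⁅a, b⁆ ∈ center G) (n : ℕ) :
    ⁅a, b ^ n⁆ = ⁅a, b⁆ ^ n := by
  have hconj : a * b * a⁻¹ = ⁅a, b⁆ * b := by rw [commutatorElement_def]; group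
  rw [commutatorElement_def, ← conj_pow, hconj, Commute.mul_pow (mem_center_iff.mp h b).symm,
    mul_inv_cancel_right]

theorem commutatorElement_pow_left_of_mem_center (h : ⁅a, b⁆ ∈ center G) (n : ℕ) :
    ⁅a ^ n, b⁆ = ⁅a, b⁆ ^ n := by
  have h' : ⁅b, a⁆ ∈ center G := by rw [← commutatorElement_inv]; exact inv_mem h
  rw [← commutatorElement_inv, commutatorElement_pow_right_of_mem_center h', ← inv_pow,
    commutatorElement_inv]

theorem mul_pow_of_commutatorElement_mem_center (h : ⁅b, a⁆ ∈ center G) (n : ℕ) :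
    (a * b) ^ n = a ^ n * b ^ n * ⁅b, a⁆ ^ n.choose 2 := by
  induction n with
  | zero => simp
  | succ n ih =>
    have hswap : b ^ n * a = ⁅b, a⁆ ^ n * a * b ^ n := by
      rw [← commutatorElement_pow_left_of_mem_center h, commutatorElement_def]; group
    have hcomm : ∀ (k : ℕ) (x : G), x * ⁅b, a⁆ ^ k = ⁅b, a⁆ ^ k * x := fun k =>
      mem_center_iff.mp (pow_mem h k)
    generalize ⁅b, a⁆ = c at *
    calc (a * b) ^ (n + 1) = a ^ n * (b ^ n * a) * b * c ^ n.choose 2 := by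
          rw [pow_succ, ih, mul_assoc _ (c ^ _), ← hcomm]; group
      _ = a ^ n * (c ^ n * (a * b ^ n * b)) * c ^ n.choose 2 := by rw [hswap]; group
      _ = a ^ (n + 1) * b ^ (n + 1) * c ^ (n + 1).choose 2 := by
          rw [← hcomm, Nat.choose_succ_succ', Nat.choose_one_right, pow_add]; group

theorem mul_pow_of_odd_of_commutatorElement_pow_eq_one (h : ⁅b, a⁆ ∈ center G) {n : ℕ}
    (hn : Odd n) (h1 : ⁅b, a⁆ ^ n = 1) : (a * b) ^ n = a ^ n * b ^ n := by
  obtain ⟨m, rfl⟩ := hn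
  have hchoose : (2 * m + 1).choose 2 = (2 * m + 1) * m := by
    rw [Nat.choose_two_right, Nat.add_sub_cancel, mul_comm 2 m, ← mul_assoc,
      Nat.mul_div_cancel _ two_pos]
  rw [mul_pow_of_commutatorElement_mem_center h, hchoose, pow_mul, h1, one_pow, mul_one]

theorem commutatorElement_pow_exponent_quotient_center (h : ⁅a, b⁆ ∈ center G) :
    ⁅a, b⁆ ^ Monoid.exponent (G ⧸ center G) = 1 := by
  have hb : b ^ Monoid.exponent (G ⧸ center G) ∈ center G := by
    rw [← QuotientGroup.eq_one_iff, QuotientGroup.mk_pow]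
    exact Monoid.pow_exponent_eq_one _
  rw [← commutatorElement_pow_right_of_mem_center h, commutatorElement_eq_one_iff_mul_comm]
  exact mem_center_iff.mp hb a

theorem exponent_quotient_center_dvd (hc : ∀ a b : G, ⁅a, b⁆ ∈ center G) {n : ℕ}
    (hn : ∀ a b : G, ⁅a, b⁆ ^ n = 1) : Monoid.exponent (G ⧸ center G) ∣ n := by
  refine Monoid.exponent_dvd_of_forall_pow_eq_one fun x => ?_
  induction x using QuotientGroup.induction_on with | H g => ?_
  rw [← QuotientGroup.mk_pow, QuotientGroup.eq_one_iff, mem_center_iff]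
  intro a
  rw [← commutatorElement_eq_one_iff_mul_comm, commutatorElement_pow_right_of_mem_center (hc a g),
    hn]

end ClassTwo

theorem CommGroup.exists_surjective_zmod_of_pow_ne_one {A : Type*} [CommGroup A] [Finite A]
    {x : A} {n : ℕ} (hx : x ^ n ≠ 1) :
    ∃ (d : ℕ) (π : A →* Multiplicative (ZMod d)), Function.Surjective π ∧ ¬d ∣ n := by
  obtain ⟨ι, _, d, -, ⟨e⟩⟩ := CommGroup.equiv_prod_multiplicative_zmod_of_finite A
  obtain ⟨i, hi⟩ : ∃ i, e x i ^ n ≠ 1 := by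
    contrapose! hx
    rw [← e.map_eq_one_iff, map_pow]
    exact funext hx
  refine ⟨d i, (Pi.evalMonoidHom _ i).comp e.toMonoidHom,
    (Function.surjective_eval i).comp e.surjective, ?_⟩
  rintro ⟨k, rfl⟩
  refine hi ?_
  rw [pow_mul, ← ofAdd_toAdd (e x i), ← ofAdd_nsmul, nsmul_eq_mul, ZMod.natCast_self, zero_mul,
    ofAdd_zero, one_pow]

section PGroup

variable {p : ℕ} [Fact p.Prime]

theorem IsPGroup.exists_orderOf_eq_pow_succ {G : Type*} [Group G] (hG : IsPGroup p G) {x : G}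
    {r : ℕ} (hx : x ^ p ^ r ≠ 1) : ∃ y : G, orderOf y = p ^ (r + 1) := by
  obtain ⟨s, hs⟩ := IsPGroup.iff_orderOf.mp hG x
  have hrs : r + 1 ≤ s := by
    by_contra! hsr
    exact hx (orderOf_dvd_iff_pow_eq_one.mp (hs ▸ pow_dvd_pow p (by omega)))
  refine ⟨x ^ p ^ (s - (r + 1)), ?_⟩
  rw [orderOf_pow_of_dvd (pow_ne_zero _ (Fact.out : p.Prime).ne_zero)
    (hs ▸ pow_dvd_pow p (Nat.sub_le s _)), hs, Nat.pow_div (Nat.sub_le s _)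
    (Fact.out : p.Prime).pos, Nat.sub_sub_self hrs]

theorem IsPGroup.exists_monoidHom_apply_eq {A B : Type*} [CommGroup A] [Finite A] [Group B]
    (hA : IsPGroup p A) {x : A} {r : ℕ} (hx : x ^ p ^ r ≠ 1) {z : B}
    (hz : orderOf z = p ^ (r + 1)) : ∃ (f : A →* B) (a : A), f a = z := by
  obtain ⟨d, π, hπ, hd⟩ := CommGroup.exists_surjective_zmod_of_pow_ne_one hx
  set gen := Multiplicative.ofAdd (1 : ZMod d)
  have hgen : orderOf gen = d := by rw [orderOf_ofAdd_eq_addOrderOf, ZMod.addOrderOf_one]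
  have hgen_mem : ∀ y, y ∈ zpowers gen := fun y => by
    obtain ⟨k, hk⟩ := ZMod.intCast_surjective (Multiplicative.toAdd y)
    exact ⟨k, by rw [← ofAdd_toAdd y, ← hk, ← zsmul_one, ofAdd_zsmul]⟩
  obtain ⟨a, ha⟩ := hπ gen
  have hdvd : orderOf z ∣ orderOf gen := by
    obtain ⟨t, ht⟩ := IsPGroup.iff_orderOf.mp hA a
    obtain ⟨u, -, rfl⟩ := (Nat.dvd_prime_pow Fact.out).mp (hgen ▸ ht ▸ ha ▸ orderOf_map_dvd π a)
    rw [hz, hgen]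
    exact pow_dvd_pow p (not_le.mp fun hur => hd (pow_dvd_pow p hur))
  exact ⟨(monoidHomOfForallMemZpowers hgen_mem hdvd).comp π, a, by
    rw [MonoidHom.comp_apply, ha, monoidHomOfForallMemZpowers_apply_gen]⟩

end PGroup

theorem Nat.Prime.coprime_pow_add_one {p : ℕ} (hp : p.Prime) (hodd : Odd p) (r : ℕ) :
    p.Coprime (p ^ r + 1) := by
  refine (Nat.Prime.coprime_iff_not_dvd hp).mpr fun hdvd => ?_
  rcases r.eq_zero_or_pos with rfl | hr
  · have := (Nat.prime_dvd_prime_iff_eq hp Nat.prime_two).mp hdvd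
    subst this
    exact Nat.not_odd_iff_even.mpr even_two hodd
  · exact hp.one_lt.ne' (Nat.dvd_one.mp ((Nat.dvd_add_right (dvd_pow_self p hr.ne')).mp hdvd))

section AbsoluteCenter

theorem absoluteCenter_le_center (G : Type*) [Group G] : absoluteCenter G ≤ center G :=
  fun _ hz => mem_center_iff.mpr fun g => mul_inv_eq_iff_eq_mul.mp (hz (MulAut.conj g))

instance absoluteCenter_characteristic (G : Type*) [Group G] :
    (absoluteCenter G).Characteristic :=
  characteristic_iff_le_comap.mpr fun φ _ hz => by
    rw [mem_comap, MulEquiv.coe_toMonoidHom, hz φ]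
    exact hz

variable {G : Type*} [Group G]

theorem commutatorElement_mem_absoluteCenter
    (hInn : (MulAut.conj : G →* MulAut G).range ≤ absCentralAut G) (a g : G) :
    ⁅a, g⁆ ∈ absoluteCenter G := by
  have hk : g⁻¹ * MulAut.conj a g ∈ absoluteCenter G := hInn ⟨a, rfl⟩ g
  have hconj : ⁅a, g⁆ = MulAut.conj g (g⁻¹ * MulAut.conj a g) := by
    simp only [commutatorElement_def, MulAut.conj_apply]; group
  rw [hconj, hk (MulAut.conj g)]
  exact hk

theorem isMulCommutative_quotient_absoluteCenter
    (hInn : (MulAut.conj : G →* MulAut G).range ≤ absCentralAut G) :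
    IsMulCommutative (G ⧸ absoluteCenter G) :=
  Normal.quotient_commutative_iff_commutator_le.mpr <| by
    rw [commutator_def, commutator_le]
    exact fun a _ g _ => commutatorElement_mem_absoluteCenter hInn a g

theorem exists_eq_commutatorElement_of_absCentralAut_le [Finite G]
    (hAut : absCentralAut G ≤ (MulAut.conj : G →* MulAut G).range) (f : G →* G)
    (hf : ∀ g, f g ∈ absoluteCenter G) (hker : ∀ g, g * f g = 1 → g = 1) :
    ∃ a : G, ∀ g, f g = ⁅a, g⁆ := by
  have hcomm : ∀ g x, x * f g = f g * x := fun g =>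
    mem_center_iff.mp (absoluteCenter_le_center G (hf g))
  let φ : G →* G := MonoidHom.mk' (fun g => g * f g) fun x y => by
    rw [map_mul, mul_assoc x, ← mul_assoc y, hcomm x y]; group
  have hφ : Function.Bijective φ :=
    Finite.injective_iff_bijective.mp ((injective_iff_map_eq_one φ).mpr hker)
  obtain ⟨a, ha⟩ := hAut (show MulEquiv.ofBijective φ hφ ∈ absCentralAut G from fun g => by
    simpa [φ] using hf g)
  refine ⟨a, fun g => ?_⟩
  have hg : MulAut.conj a g = g * f g := by rw [ha]; rfl
  rw [commutatorElement_def, ← MulAut.conj_apply, hg, hcomm, mul_inv_cancel_right]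

end AbsoluteCenter

-- Makes `G ⧸ L` a `CommGroup` once `IsMulCommutative (G ⧸ L)` is known.
open scoped IsMulCommutative in
theorem pow_exponent_quotient_center_mem_absoluteCenter {p : ℕ} [Fact p.Prime] {G : Type*}
    [Group G] [Finite G] (hG : IsPGroup p G)
    (h : absCentralAut G = (MulAut.conj : G →* MulAut G).range) {l : G}
    (hl : l ∈ absoluteCenter G) (hle : l ^ Monoid.exponent (G ⧸ center G) ≠ 1) (g₀ : G) :
    g₀ ^ Monoid.exponent (G ⧸ center G) ∈ absoluteCenter G := by
  obtain ⟨r, hr⟩ := (hG.to_quotient (center G)).exists_exponent_eq_pow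
  set L := absoluteCenter G
  by_contra hg₀
  have := isMulCommutative_quotient_absoluteCenter h.ge
  have hl' : (⟨l, hl⟩ : L) ^ p ^ r ≠ 1 := by
    rwa [← hr, ne_eq, Subtype.ext_iff, SubmonoidClass.coe_pow]
  have hg₀' : (g₀ : G ⧸ L) ^ p ^ r ≠ 1 := by
    rwa [← hr, ← QuotientGroup.mk_pow, ne_eq, QuotientGroup.eq_one_iff]
  obtain ⟨z, hz⟩ := (hG.to_subgroup L).exists_orderOf_eq_pow_succ hl'
  obtain ⟨f, a, hfa⟩ := (hG.to_quotient L).exists_monoidHom_apply_eq hg₀' hz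
  let F : G →* G := L.subtype.comp (f.comp (QuotientGroup.mk' L))
  have hF : ∀ g, F g ∈ L := fun g => (f _).2
  have hker : ∀ g, g * F g = 1 → g = 1 := fun g hg => by
    have hgL : g ∈ L := by rw [eq_inv_of_mul_eq_one_left hg]; exact inv_mem (hF g)
    have hFg : F g = 1 := by simp [F, (QuotientGroup.eq_one_iff g).mpr hgL]
    rwa [hFg, mul_one] at hg
  obtain ⟨b, hb⟩ := exists_eq_commutatorElement_of_absCentralAut_le h.le F hF hker
  obtain ⟨g₁, rfl⟩ := QuotientGroup.mk_surjective a
  have hFz : F g₁ = z := by simp [F, hfa]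
  refine pow_ne_one_of_lt_orderOf (pow_ne_zero r (Fact.out : p.Prime).ne_zero)
    (hz ▸ Nat.pow_lt_pow_right (Fact.out : p.Prime).one_lt r.lt_add_one) ?_
  rw [Subtype.ext_iff, SubmonoidClass.coe_pow, ← hFz, hb, ← hr]
  exact commutatorElement_pow_exponent_quotient_center
    (absoluteCenter_le_center G (commutatorElement_mem_absoluteCenter h.ge b g₁))

theorem pow_exponent_quotient_center_eq_one_of_mem_absoluteCenter {p : ℕ} [Fact p.Prime]
    (hodd : Odd p) {G : Type*} [Group G] [Finite G] (hG : IsPGroup p G)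
    (h : absCentralAut G = (MulAut.conj : G →* MulAut G).range) {l : G}
    (hl : l ∈ absoluteCenter G) : l ^ Monoid.exponent (G ⧸ center G) = 1 := by
  obtain ⟨r, hr⟩ := (hG.to_quotient (center G)).exists_exponent_eq_pow
  set e := Monoid.exponent (G ⧸ center G)
  by_contra hle
  have hcomm : ∀ a b : G, ⁅a, b⁆ ∈ center G := fun a b =>
    absoluteCenter_le_center G (commutatorElement_mem_absoluteCenter h.ge a b)
  let f : G →* G := MonoidHom.mk' (· ^ e) fun a b =>
    mul_pow_of_odd_of_commutatorElement_pow_eq_one (hcomm b a) (hr ▸ hodd.pow)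
      (commutatorElement_pow_exponent_quotient_center (hcomm b a))
  have hcop : p.Coprime (e + 1) := hr ▸ (Fact.out : p.Prime).coprime_pow_add_one hodd r
  obtain ⟨a, ha⟩ := exists_eq_commutatorElement_of_absCentralAut_le h.le f
    (pow_exponent_quotient_center_mem_absoluteCenter hG h hl hle) fun g hg =>
      (hG.powEquiv hcop).injective (by
        rw [IsPGroup.powEquiv_apply, IsPGroup.powEquiv_apply, one_pow, pow_succ']; exact hg)
  exact hle ((ha l).trans (commutatorElement_eq_one_iff_mul_comm.mpr
    (mem_center_iff.mp (absoluteCenter_le_center G hl) a)))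

theorem exponent_quotient_center_eq_general {p : ℕ} [Fact p.Prime] (hodd : Odd p)
    (G : Type*) [Group G] [Finite G]
    (hG : IsPGroup p G)
    (h : absCentralAut G = (MulAut.conj : G →* MulAut G).range) :
    Monoid.exponent (G ⧸ Subgroup.center G) = Monoid.exponent (absoluteCenter G) := by
  have hcomm := commutatorElement_mem_absoluteCenter h.ge
  refine Nat.dvd_antisymm ?_ ?_
  · exact exponent_quotient_center_dvd (fun a b => absoluteCenter_le_center G (hcomm a b))
      fun a b => pow_exponent_eq_one (hcomm a b)
  · refine Monoid.exponent_dvd_of_forall_pow_eq_one fun l => Subtype.ext ?_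
    rw [SubmonoidClass.coe_pow]
    exact pow_exponent_quotient_center_eq_one_of_mem_absoluteCenter hodd hG h l.2

/-- Let `p` be an odd prime and `G` a finite non-abelian `p`-group with
`Aut_l(G) = Inn(G)`.  Then `exp(G/Z(G)) = exp(L(G))`. -/
theorem exponent_quotient_center_eq {p : ℕ} [Fact p.Prime] (hodd : Odd p)
    (G : Type*) [Group G] [Finite G]
    (hG : IsPGroup p G) (hna : ∃ a b : G, a * b ≠ b * a)
    (h : absCentralAut G = (MulAut.conj : G →* MulAut G).range) :
    Monoid.exponent (G ⧸ Subgroup.center G) = Monoid.exponent (absoluteCenter G) :=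
  exponent_quotient_center_eq_general hodd G hG h
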